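/- Let f : U → ℝ be C¹ on open U ⊂ ℝ^d, Φ : U → ℝⁿ, φ : U → ℝ^{d−n+1} C¹, and define W¹(Φ, φ)(y) := ⟨D₁Φ(y), Φ(y)⟩ where ⟨D₁Φ(y), z⟩ = det [[0, ∂_yφ(y)],[z, ∂_yΦ(y)]] (a square (d+1)×(d+1) determinant with z ∈ ℝⁿ a column and ∂_yφ of size (d−n+1)×d). Then W¹(fΦ, φ)(y) = f(y)ⁿ · W¹(Φ, φ)(y) for all y ∈ U. -/

import Mathlib

/-! By the product rule, the row of `D₁(fΦ)` belonging to `Φᵢ`, evaluated at `f(y)Φ(y)`, is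
`f(y)` times the corresponding row of `D₁Φ` evaluated at `Φ(y)`, plus `Φᵢ(y) · (0, ∇f(y))`, while
the rows of `φ` are unchanged. In matrix form this is `diag(s) M + (M e₀) ⊗ w` with
`s = (1,…,1,f(y),…,f(y))` and `w = (0, ∇f(y))`. Since `diag(s) M e₀ = f(y) · M e₀`, for `f(y) ≠ 0`
the correction is `diag(s) M (e₀ ⊗ w / f(y))`, a column operation of determinant `1 + w₀ / f(y) = 1`;
for `f(y) = 0` the first column of the new matrix vanishes and both sides are zero. -/

/-- `⟨D₁Φ(y), z⟩ = det [[0, ∂φ(y)],[z, ∂Φ(y)]]`, a `(d+1)×(d+1)` determinant with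
`m + n = d + 1` (`φ` has `m = d − n + 1` components). -/
noncomputable def D1 {d n m : ℕ} (h : m + n = d + 1)
    (Φ : (Fin d → ℝ) → Fin n → ℝ) (φ : (Fin d → ℝ) → Fin m → ℝ)
    (y : Fin d → ℝ) (z : Fin n → ℝ) : ℝ :=
  Matrix.det (Matrix.of fun (r c : Fin (d + 1)) =>
    Fin.addCases (motive := fun _ => ℝ)
      (fun i : Fin m =>
        Fin.cases (0 : ℝ)
          (fun j : Fin d => fderiv ℝ (fun y' => φ y' i) y (Pi.single j 1)) c)
      (fun i : Fin n =>
        Fin.cases (z i)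
          (fun j : Fin d => fderiv ℝ (fun y' => Φ y' i) y (Pi.single j 1)) c)
      (Fin.cast h.symm r))

namespace Matrix

variable {K ι : Type*} [Field K] [Fintype ι] [DecidableEq ι]

theorem det_diagonal_mul_add_vecMulVec (M : Matrix ι ι K) (i₀ : ι) (a : K)
    (s w : ι → K) (hs : ∀ r, s r * M r i₀ = a * M r i₀) (hw : w i₀ = 0) :
    (diagonal s * M + vecMulVec (fun r => M r i₀) w).det = (∏ r, s r) * M.det := by
  rcases eq_or_ne a 0 with rfl | ha
  · have hs₀ : ∀ r, s r * M r i₀ = 0 := by simpa using hs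
    rw [det_eq_zero_of_column_eq_zero i₀ fun r => by simp [diagonal_mul, vecMulVec_apply, hs₀, hw]]
    by_cases hM : ∀ r, M r i₀ = 0
    · rw [det_eq_zero_of_column_eq_zero i₀ hM, mul_zero]
    · push Not at hM
      obtain ⟨r, hr⟩ := hM
      rw [Finset.prod_eq_zero (Finset.mem_univ r) ((mul_eq_zero.mp (hs₀ r)).resolve_right hr),
        zero_mul]
  · have hcol : (diagonal s * M) *ᵥ Pi.single i₀ 1 = a • fun r => M r i₀ := by
      ext r
      simp [hs]
    have hfactor : diagonal s * M + vecMulVec (fun r => M r i₀) w =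
        diagonal s * M * (1 + vecMulVec (Pi.single i₀ 1) (a⁻¹ • w)) := by
      rw [mul_add, mul_one, mul_vecMulVec, hcol, vecMulVec_smul, smul_vecMulVec, smul_smul,
        inv_mul_cancel₀ ha, one_smul]
    rw [hfactor, det_mul, det_mul, det_diagonal, vecMulVec_eq Unit,
      det_one_add_replicateCol_mul_replicateRow]
    simp [hw]

end Matrix

theorem prod_append_one_const {M : Type*} [CommMonoid M] {m n k : ℕ} (h : m + n = k) (a : M) :
    ∏ r : Fin k, Fin.append (fun _ : Fin m => 1) (fun _ : Fin n => a) (Fin.cast h.symm r) =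
      a ^ n := by
  rw [Fin.prod_congr' _ h.symm, Fin.prod_univ_add]
  simp

open Matrix

section

variable {d n m : ℕ}

noncomputable def partialDerivs (g : (Fin d → ℝ) → ℝ) (y : Fin d → ℝ) : Fin d → ℝ :=
  fun j => fderiv ℝ g y (Pi.single j 1)

noncomputable def D1Matrix (h : m + n = d + 1)
    (Φ : (Fin d → ℝ) → Fin n → ℝ) (φ : (Fin d → ℝ) → Fin m → ℝ)
    (y : Fin d → ℝ) (z : Fin n → ℝ) : Matrix (Fin (d + 1)) (Fin (d + 1)) ℝ :=
  of fun r c => Fin.append (fun i => vecCons 0 (partialDerivs (φ · i) y) c)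
    (fun i => vecCons (z i) (partialDerivs (Φ · i) y) c) (Fin.cast h.symm r)

theorem D1_eq_det (h : m + n = d + 1) (Φ : (Fin d → ℝ) → Fin n → ℝ)
    (φ : (Fin d → ℝ) → Fin m → ℝ) (y : Fin d → ℝ) (z : Fin n → ℝ) :
    D1 h Φ φ y z = (D1Matrix h Φ φ y z).det := by
  rfl

theorem partialDerivs_mul {g k : (Fin d → ℝ) → ℝ} {y : Fin d → ℝ}
    (hg : DifferentiableAt ℝ g y) (hk : DifferentiableAt ℝ k y) :
    partialDerivs (fun y' => g y' * k y') y = g y • partialDerivs k y + k y • partialDerivs g y := by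
  ext j
  simp [partialDerivs, fderiv_fun_mul hg hk]

theorem D1Matrix_apply_zero (h : m + n = d + 1) (Φ : (Fin d → ℝ) → Fin n → ℝ)
    (φ : (Fin d → ℝ) → Fin m → ℝ) (y : Fin d → ℝ) (z : Fin n → ℝ) (r : Fin (d + 1)) :
    D1Matrix h Φ φ y z r 0 = Fin.append 0 z (Fin.cast h.symm r) := by
  simp only [D1Matrix, of_apply]
  induction Fin.cast h.symm r using Fin.addCases <;> simp

theorem D1Matrix_smul (h : m + n = d + 1) {f : (Fin d → ℝ) → ℝ} {Φ : (Fin d → ℝ) → Fin n → ℝ}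
    (φ : (Fin d → ℝ) → Fin m → ℝ) {y : Fin d → ℝ} (hf : DifferentiableAt ℝ f y)
    (hΦ : ∀ i, DifferentiableAt ℝ (fun y' => Φ y' i) y) :
    D1Matrix h (fun y' => f y' • Φ y') φ y (f y • Φ y) =
      diagonal (fun r => Fin.append (fun _ => 1) (fun _ => f y) (Fin.cast h.symm r))
          * D1Matrix h Φ φ y (Φ y) +
        vecMulVec (fun r => D1Matrix h Φ φ y (Φ y) r 0) (vecCons 0 (partialDerivs f y)) := by
  ext r c
  rw [Matrix.add_apply, diagonal_mul, vecMulVec_apply, D1Matrix_apply_zero]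
  simp only [D1Matrix, of_apply]
  induction Fin.cast h.symm r using Fin.addCases with
  | left i => induction c using Fin.cases <;> simp
  | right i =>
    simp only [Fin.append_right]
    induction c using Fin.cases with
    | zero => simp
    | succ j => simp [partialDerivs_mul hf (hΦ i)]

end

theorem stmt_9_general (d n m : ℕ) (h : m + n = d + 1)
    (U : Set (Fin d → ℝ))
    (f : (Fin d → ℝ) → ℝ)
    (Φ : (Fin d → ℝ) → Fin n → ℝ) (φ : (Fin d → ℝ) → Fin m → ℝ)
    (hf : ∀ y ∈ U, DifferentiableAt ℝ f y)
    (hΦ : ∀ y ∈ U, ∀ i, DifferentiableAt ℝ (fun y' => Φ y' i) y) :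
    ∀ y ∈ U,
      D1 h (fun y' => f y' • Φ y') φ y (f y • Φ y) = (f y) ^ n * D1 h Φ φ y (Φ y) := by
  intro y hy
  have hscale : ∀ r, Fin.append (fun _ => 1) (fun _ => f y) (Fin.cast h.symm r) *
      D1Matrix h Φ φ y (Φ y) r 0 = f y * D1Matrix h Φ φ y (Φ y) r 0 := by
    intro r
    rw [D1Matrix_apply_zero]
    induction Fin.cast h.symm r using Fin.addCases <;> simp
  rw [D1_eq_det, D1_eq_det, D1Matrix_smul h φ (hf y hy) (hΦ y hy),
    det_diagonal_mul_add_vecMulVec _ 0 (f y) _ _ hscale (cons_val_zero _ _),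
    prod_append_one_const h]

/-- Homogeneity of the weight `W¹(Φ,φ)(y) := ⟨D₁Φ(y), Φ(y)⟩`:
`W¹(fΦ, φ)(y) = f(y)ⁿ · W¹(Φ, φ)(y)` for `C¹` scalar `f`. -/
theorem stmt_9 (d n m : ℕ) (h : m + n = d + 1)
    (U : Set (Fin d → ℝ)) (hU : IsOpen U)
    (f : (Fin d → ℝ) → ℝ)
    (Φ : (Fin d → ℝ) → Fin n → ℝ) (φ : (Fin d → ℝ) → Fin m → ℝ)
    (hf : ∀ y ∈ U, DifferentiableAt ℝ f y)
    (hΦ : ∀ y ∈ U, ∀ i, DifferentiableAt ℝ (fun y' => Φ y' i) y)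
    (hφ : ∀ y ∈ U, ∀ i, DifferentiableAt ℝ (fun y' => φ y' i) y) :
    ∀ y ∈ U,
      D1 h (fun y' => f y' • Φ y') φ y (f y • Φ y) = (f y) ^ n * D1 h Φ φ y (Φ y) :=
  stmt_9_general d n m h U f Φ φ hf hΦ
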